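/- Let f be a nonconstant continuous W^{1,2} function on the unit circle with Fourier coefficients c_n, normalized so that c₀ = 0 and max_{𝕋}|f| = 1. Let g(e^{iθ}) = f(e^{iθ}) - c₁e^{iθ}. If min_{𝕋}|f| ≤ 1/2, then max_{𝕋}|g| ≥ 1/4, and consequently Σ_{n≠1} n²|c_n|² ≥ 1/48. -/

import Mathlib

open Complex MeasureTheory Filter
open scoped Real Topology

/-!
The first harmonic has constant modulus `|c₁|`, so `|g| ≥ |f| - |c₁|` and `|g| ≥ |c₁| - |f|`
everywhere; adding these at a point where `|f|` is near its sup and one where it is near its inf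
gives `sup |g| ≥ (sup |f| - inf |f|) / 2 ≥ 1/4`. On the other hand `sup |g| ≤ ∑_{n ≠ 1} |cₙ|`, and
Cauchy–Schwarz against the weights `1/n²` gives
`(∑_{n ≠ 1} |cₙ|)² ≤ (π²/3 - 1) ∑_{n ≠ 1} n² |cₙ|² ≤ 3 ∑_{n ≠ 1} n² |cₙ|²`.
-/

theorem sq_tsum_mul_le_tsum_sq_mul_tsum_sq {ι : Type*} {u v : ι → ℝ} (hu : ∀ i, 0 ≤ u i)
    (hv : ∀ i, 0 ≤ v i) (hu2 : Summable fun i => u i ^ 2) (hv2 : Summable fun i => v i ^ 2) :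
    Summable (fun i => u i * v i) ∧
      (∑' i, u i * v i) ^ 2 ≤ (∑' i, u i ^ 2) * ∑' i, v i ^ 2 := by
  simp only [← Real.rpow_two] at hu2 hv2 ⊢
  obtain ⟨hsum, hle⟩ :=
    Real.summable_and_inner_le_Lp_mul_Lq_tsum_of_nonneg .two_two hu hv hu2 hv2
  refine ⟨hsum, ?_⟩
  have hA : 0 ≤ ∑' i, u i ^ (2 : ℝ) := tsum_nonneg fun i => Real.rpow_nonneg (hu i) _
  have hB : 0 ≤ ∑' i, v i ^ (2 : ℝ) := tsum_nonneg fun i => Real.rpow_nonneg (hv i) _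
  have hS : 0 ≤ ∑' i, u i * v i := tsum_nonneg fun i => mul_nonneg (hu i) (hv i)
  rw [← Real.sqrt_eq_rpow, ← Real.sqrt_eq_rpow] at hle
  calc (∑' i, u i * v i) ^ (2 : ℝ) ≤ (√(∑' i, u i ^ (2 : ℝ)) * √(∑' i, v i ^ (2 : ℝ))) ^ (2 : ℝ) :=
        Real.rpow_le_rpow hS hle (by norm_num)
    _ = _ := by rw [Real.rpow_two, mul_pow, Real.sq_sqrt hA, Real.sq_sqrt hB]

theorem hasSum_one_div_int_sq : HasSum (fun n : ℤ => 1 / (n : ℝ) ^ 2) (π ^ 2 / 3) := by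
  have hnat : HasSum (fun n : ℕ => 1 / ((n : ℤ) : ℝ) ^ 2) (π ^ 2 / 6) := by
    simpa only [Int.cast_natCast] using hasSum_zeta_two
  have hneg : HasSum (fun n : ℕ => 1 / ((-n : ℤ) : ℝ) ^ 2) (π ^ 2 / 6) := by
    simpa only [Int.cast_neg, Int.cast_natCast, neg_sq] using hasSum_zeta_two
  have h := HasSum.of_nat_of_neg (f := fun n : ℤ => 1 / (n : ℝ) ^ 2) hnat hneg
  rw [Int.cast_zero, zero_pow two_ne_zero, div_zero, sub_zero] at h
  rwa [show π ^ 2 / 3 = π ^ 2 / 6 + π ^ 2 / 6 by ring]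

theorem hasSum_ite_one_div_int_sq :
    HasSum (fun n : ℤ => if n = 1 then 0 else 1 / (n : ℝ) ^ 2) (π ^ 2 / 3 - 1) := by
  simpa using hasSum_ite_sub_hasSum hasSum_one_div_int_sq 1

theorem summable_norm_and_sq_tsum_norm_le {a : ℤ → ℂ} (h0 : a 0 = 0) (h1 : a 1 = 0)
    (ha : Summable fun n : ℤ => (n : ℝ) ^ 2 * ‖a n‖ ^ 2) :
    Summable (fun n => ‖a n‖) ∧
      (∑' n, ‖a n‖) ^ 2 ≤ (π ^ 2 / 3 - 1) * ∑' n : ℤ, (n : ℝ) ^ 2 * ‖a n‖ ^ 2 := by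
  -- `‖a n‖ = |n|⁻¹ * (|n| * ‖a n‖)`; the weight can be dropped at `n = 1` because `a 1 = 0`,
  -- and at `n = 0` the junk value `0⁻¹ = 0` is harmless because `a 0 = 0`.
  set u : ℤ → ℝ := fun n => if n = 1 then 0 else |(n : ℝ)|⁻¹
  set v : ℤ → ℝ := fun n => |(n : ℝ)| * ‖a n‖
  have huv : ∀ n, u n * v n = ‖a n‖ := by
    intro n
    by_cases hn1 : n = 1
    · simp [u, v, hn1, h1]
    by_cases hn0 : n = 0
    · simp [u, v, hn0, h0]
    have hn : |(n : ℝ)| ≠ 0 := by simpa using hn0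
    simp [u, v, hn1, hn]
  have hu2 : (fun n => u n ^ 2) = fun n : ℤ => if n = 1 then 0 else 1 / (n : ℝ) ^ 2 := by
    ext n; split_ifs <;> simp [u, *]
  have hv2 : (fun n => v n ^ 2) = fun n : ℤ => (n : ℝ) ^ 2 * ‖a n‖ ^ 2 := by
    ext n; simp [v, mul_pow]
  have hCS := sq_tsum_mul_le_tsum_sq_mul_tsum_sq (u := u) (v := v)
    (fun n => by simp only [u]; split_ifs <;> positivity) (fun n => by positivity)
    (hu2 ▸ hasSum_ite_one_div_int_sq.summable) (hv2 ▸ ha)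
  simpa only [huv, hu2, hv2, hasSum_ite_one_div_int_sq.tsum_eq] using hCS

theorem norm_mul_exp_I_mul_intCast_mul (z : ℂ) (n : ℤ) (θ : ℝ) :
    ‖z * exp (I * n * θ)‖ = ‖z‖ := by
  rw [norm_mul, norm_exp]
  simp

theorem summable_mul_exp_I_mul_intCast_mul {a : ℤ → ℂ} (ha : Summable fun n => ‖a n‖) (θ : ℝ) :
    Summable fun n : ℤ => a n * exp (I * n * θ) :=
  .of_norm <| ha.congr fun n => (norm_mul_exp_I_mul_intCast_mul (a n) n θ).symm

theorem norm_tsum_mul_exp_I_mul_intCast_mul_le {a : ℤ → ℂ} (ha : Summable fun n => ‖a n‖)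
    (θ : ℝ) : ‖∑' n : ℤ, a n * exp (I * n * θ)‖ ≤ ∑' n, ‖a n‖ := by
  simpa only [norm_mul_exp_I_mul_intCast_mul] using
    norm_tsum_le_tsum_norm (summable_mul_exp_I_mul_intCast_mul ha θ).norm

theorem ciSup_norm_sub_ciInf_norm_le {ι E : Type*} [Nonempty ι] [SeminormedAddCommGroup E]
    {f h : ι → E} {r : ℝ} (hh : ∀ i, ‖h i‖ = r) (hg : BddAbove (Set.range fun i => ‖f i - h i‖)) :
    (⨆ i, ‖f i‖) - (⨅ i, ‖f i‖) ≤ 2 * ⨆ i, ‖f i - h i‖ := by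
  set G := ⨆ i, ‖f i - h i‖
  have hpair : ∀ i j, ‖f i‖ ≤ 2 * G + ‖f j‖ := by
    intro i j
    have hi : ‖f i‖ - ‖h i‖ ≤ ‖f i - h i‖ := norm_sub_norm_le _ _
    have hj : ‖h j‖ - ‖f j‖ ≤ ‖f j - h j‖ := norm_sub_rev (f j) (h j) ▸ norm_sub_norm_le _ _
    linarith [le_ciSup hg i, le_ciSup hg j, hh i, hh j]
  have hsup : ∀ j, (⨆ i, ‖f i‖) - 2 * G ≤ ‖f j‖ := fun j => by
    linarith [ciSup_le fun i => hpair i j]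
  linarith [le_ciInf hsup]

theorem stmt7_general (c : ℤ → ℂ) (f : ℝ → ℂ)
    (hW12 : Summable fun n : ℤ => (n : ℝ) ^ 2 * ‖c n‖ ^ 2)
    (hrep : ∀ θ : ℝ, f θ = ∑' n : ℤ, c n * Complex.exp (Complex.I * n * θ))
    (hc0 : c 0 = 0)
    (hmax : (⨆ θ : ℝ, ‖f θ‖) = 1)
    (hmin : (⨅ θ : ℝ, ‖f θ‖) ≤ 1 / 2) :
    (1 / 4 ≤ ⨆ θ : ℝ, ‖f θ - c 1 * Complex.exp (Complex.I * θ)‖) ∧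
    1 / 48 ≤ ∑' n : ℤ, (if n = 1 then 0 else (n : ℝ) ^ 2 * ‖c n‖ ^ 2) := by
  set a : ℤ → ℂ := fun n => if n = 1 then 0 else c n
  have ha2 : (fun n : ℤ => (n : ℝ) ^ 2 * ‖a n‖ ^ 2) =
      fun n : ℤ => if n = 1 then 0 else (n : ℝ) ^ 2 * ‖c n‖ ^ 2 := by
    ext n; split_ifs <;> simp [a, *]
  obtain ⟨ha, hS⟩ := summable_norm_and_sq_tsum_norm_le (a := a) (by simp [a, hc0]) (by simp [a])
    (ha2 ▸ (hasSum_ite_sub_hasSum hW12.hasSum 1).summable)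
  rw [ha2] at hS
  have hg : ∀ θ : ℝ, ‖f θ - c 1 * exp (I * θ)‖ ≤ ∑' n, ‖a n‖ := by
    intro θ
    have hsplit : (fun n : ℤ => c n * exp (I * n * θ)) =
        fun n => (if n = 1 then c 1 * exp (I * θ) else 0) + a n * exp (I * n * θ) := by
      ext n; by_cases h : n = 1 <;> simp [a, h]
    rw [hrep θ, hsplit, Summable.tsum_add (hasSum_ite_eq 1 _).summable
      (summable_mul_exp_I_mul_intCast_mul ha θ), tsum_ite_eq, add_sub_cancel_left]
    exact norm_tsum_mul_exp_I_mul_intCast_mul_le ha θ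
  have hsup : 1 / 4 ≤ ⨆ θ : ℝ, ‖f θ - c 1 * exp (I * θ)‖ := by
    have hosc := ciSup_norm_sub_ciInf_norm_le (f := f) (h := fun θ : ℝ => c 1 * exp (I * θ))
      (r := ‖c 1‖) (fun θ => by simp [norm_exp_ofReal_mul_I, mul_comm I])
      ⟨_, Set.forall_mem_range.2 hg⟩
    linarith
  refine ⟨hsup, ?_⟩
  have hB : 0 ≤ ∑' n : ℤ, (if n = 1 then 0 else (n : ℝ) ^ 2 * ‖c n‖ ^ 2) :=
    tsum_nonneg fun n => by split_ifs <;> positivity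
  have hS4 : 1 / 4 ≤ ∑' n, ‖a n‖ := hsup.trans (ciSup_le hg)
  have hpi : π ^ 2 / 3 - 1 ≤ 3 := by nlinarith [Real.pi_lt_d2, Real.pi_pos]
  nlinarith [mul_le_mul_of_nonneg_right hpi hB, pow_le_pow_left₀ (by norm_num) hS4 2]

theorem stmt7 (c : ℤ → ℂ) (f : ℝ → ℂ) (hcont : Continuous f)
    (hW12 : Summable fun n : ℤ => (n : ℝ) ^ 2 * ‖c n‖ ^ 2)
    (hrep : ∀ θ : ℝ, f θ = ∑' n : ℤ, c n * Complex.exp (Complex.I * n * θ))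
    (hnc : ∃ θ₁ θ₂ : ℝ, f θ₁ ≠ f θ₂)
    (hc0 : c 0 = 0)
    (hmax : (⨆ θ : ℝ, ‖f θ‖) = 1)
    (hmin : (⨅ θ : ℝ, ‖f θ‖) ≤ 1 / 2) :
    (1 / 4 ≤ ⨆ θ : ℝ, ‖f θ - c 1 * Complex.exp (Complex.I * θ)‖) ∧
    1 / 48 ≤ ∑' n : ℤ, (if n = 1 then 0 else (n : ℝ) ^ 2 * ‖c n‖ ^ 2) :=
  stmt7_general c f hW12 hrep hc0 hmax hmin
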